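/- Controllability of the qubit control system with pulse-shaped controls: for every T > 0 and every unit quaternion q̄ ∈ ℍ, there exist continuously differentiable controls u1, u2 : [0, T] → ℝ with u1(0) = u2(0) = u1(T) = u2(T) = 0 and a differentiable curve q : [0, T] → ℍ satisfying q'(t) = (u1(t) e1 + u2(t) e2) · q(t) for all t ∈ [0, T], q(0) = 1 and q(T) = q̄. -/

import Mathlib

open Quaternion Set

/-- The imaginary quaternion unit `i`. -/
noncomputable def e1 : ℍ[ℝ] := ⟨0, 1, 0, 0⟩
/-- The imaginary quaternion unit `j`. -/
noncomputable def e2 : ℍ[ℝ] := ⟨0, 0, 1, 0⟩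
/-- The imaginary quaternion unit `k`. -/
noncomputable def e3 : ℍ[ℝ] := ⟨0, 0, 0, 1⟩

/-- `qexp φ = exp (φ e1) = cos φ + (sin φ) e1`. -/
noncomputable def qexp (φ : ℝ) : ℍ[ℝ] :=
  (Real.cos φ : ℍ[ℝ]) + (Real.sin φ : ℍ[ℝ]) * e1

/-!
Every unit quaternion has Euler angles: `q̄ = exp (γ e1) exp (β e2) exp (α e1)`. The path
`t ↦ exp (γ σ₃ t · e1) exp (β σ₂ t · e2) exp (α σ₁ t · e1)`, where `σ₁, σ₂, σ₃` are smooth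
steps from `0` to `1` switching one after the other, joins `1` to `q̄`. While `σₖ` switches, the
factors to its left are still `1`, so the velocity is a left multiple of `q` by
`(α σ₁' + γ σ₃') e1 + β σ₂' e2`; the controls `σₖ'` are smooth and vanish outside the
switching intervals, in particular at `0` and `T`.
-/

@[simp] lemma e1_re : e1.re = 0 := rfl
@[simp] lemma e1_imI : e1.imI = 1 := rfl
@[simp] lemma e1_imJ : e1.imJ = 0 := rfl
@[simp] lemma e1_imK : e1.imK = 0 := rfl
@[simp] lemma e2_re : e2.re = 0 := rfl
@[simp] lemma e2_imI : e2.imI = 0 := rfl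
@[simp] lemma e2_imJ : e2.imJ = 1 := rfl
@[simp] lemma e2_imK : e2.imK = 0 := rfl

lemma e1_mul_self : e1 * e1 = -1 := by ext <;> simp

lemma e2_mul_self : e2 * e2 = -1 := by ext <;> simp

/-- `cis u φ = exp (φ u)` when `u * u = -1`. -/
noncomputable def cis (u : ℍ[ℝ]) (φ : ℝ) : ℍ[ℝ] :=
  (Real.cos φ : ℍ[ℝ]) + (Real.sin φ : ℍ[ℝ]) * u

@[simp] lemma cis_zero (u : ℍ[ℝ]) : cis u 0 = 1 := by simp [cis]

lemma hasDerivAt_cis {u : ℍ[ℝ]} (hu : u * u = -1) (φ : ℝ) :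
    HasDerivAt (cis u) (u * cis u φ) φ := by
  have h : HasDerivAt (fun x => Real.cos x • (1 : ℍ[ℝ]) + Real.sin x • u)
      ((-Real.sin φ) • (1 : ℍ[ℝ]) + Real.cos φ • u) φ :=
    ((Real.hasDerivAt_cos φ).smul_const _).add ((Real.hasDerivAt_sin φ).smul_const _)
  convert h using 1
  · funext x
    simp [cis, ← coe_mul_eq_smul]
  · simp only [cis, mul_add, ← mul_assoc, ← coe_commutes, mul_assoc _ u u, hu]
    simp [← coe_mul_eq_smul]
    abel

lemma HasDerivAt.cis {u : ℍ[ℝ]} (hu : u * u = -1) {f : ℝ → ℝ} {f' t : ℝ}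
    (hf : HasDerivAt f f' t) :
    HasDerivAt (fun s => cis u (f s)) ((f' : ℍ[ℝ]) * u * cis u (f t)) t := by
  simpa [Function.comp_def, mul_assoc, coe_mul_eq_smul] using (hasDerivAt_cis hu (f t)).scomp t hf

lemma cis_e1_mul_cis_e2_mul_cis_e1 (γ β α : ℝ) :
    cis e1 γ * cis e2 β * cis e1 α = (
      ⟨Real.cos β * Real.cos (γ + α), Real.cos β * Real.sin (γ + α),
        Real.sin β * Real.cos (γ - α), Real.sin β * Real.sin (γ - α)⟩ : ℍ[ℝ]) := by
  ext <;> simp [cis, Real.cos_add, Real.sin_add, Real.cos_sub, Real.sin_sub] <;> ring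

lemma exists_euler_angles {q : ℍ[ℝ]} (hq : ‖q‖ = 1) :
    ∃ α β γ : ℝ, cis e1 γ * cis e2 β * cis e1 α = q := by
  -- polar coordinates of the two complex halves `q.re + q.imI i` and `q.imJ + q.imK i`
  set z : ℂ := ⟨q.re, q.imI⟩
  set w : ℂ := ⟨q.imJ, q.imK⟩
  have hzw : ‖z‖ ^ 2 + ‖w‖ ^ 2 = 1 := by
    have h := normSq_eq_norm_mul_self q
    rw [hq, normSq_def'] at h
    simp only [Complex.sq_norm, Complex.normSq_apply, z, w]
    linarith
  have hw1 : ‖w‖ ≤ 1 := by nlinarith [norm_nonneg z, norm_nonneg w]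
  set β := Real.arcsin ‖w‖
  have hsin : Real.sin β = ‖w‖ := Real.sin_arcsin (by linarith [norm_nonneg w]) hw1
  have hcos : Real.cos β = ‖z‖ := by
    rw [Real.cos_arcsin, show 1 - ‖w‖ ^ 2 = ‖z‖ ^ 2 by linarith, Real.sqrt_sq (norm_nonneg z)]
  refine ⟨(z.arg - w.arg) / 2, β, (z.arg + w.arg) / 2, ?_⟩
  rw [cis_e1_mul_cis_e2_mul_cis_e1, show (z.arg + w.arg) / 2 + (z.arg - w.arg) / 2 = z.arg by ring,
    show (z.arg + w.arg) / 2 - (z.arg - w.arg) / 2 = w.arg by ring, hsin, hcos]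
  ext
  · exact Complex.norm_mul_cos_arg z
  · exact Complex.norm_mul_sin_arg z
  · exact Complex.norm_mul_cos_arg w
  · exact Complex.norm_mul_sin_arg w


lemma hasDerivAt_euler_path {a b c : ℝ → ℝ} {a' b' c' t : ℝ} (ha : HasDerivAt a a' t)
    (hb : HasDerivAt b b' t) (hc : HasDerivAt c c' t) (ha' : a' ≠ 0 → b t = 0 ∧ c t = 0)
    (hb' : b' ≠ 0 → c t = 0) :
    HasDerivAt (fun s => cis e1 (c s) * cis e2 (b s) * cis e1 (a s))
      ((((a' + c' : ℝ) : ℍ[ℝ]) * e1 + (b' : ℍ[ℝ]) * e2) *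
        (cis e1 (c t) * cis e2 (b t) * cis e1 (a t))) t := by
  set A := cis e1 (c t)
  set B := cis e2 (b t)
  set C := cis e1 (a t)
  have hB : A * ((b' : ℍ[ℝ]) * e2 * B) * C = (b' : ℍ[ℝ]) * e2 * (A * B * C) := by
    by_cases h : b' = 0
    · simp [h]
    · simp [A, hb' h, mul_assoc]
  have hA : A * B * ((a' : ℍ[ℝ]) * e1 * C) = (a' : ℍ[ℝ]) * e1 * (A * B * C) := by
    by_cases h : a' = 0
    · simp [h]
    · simp [A, B, (ha' h).1, (ha' h).2, mul_assoc]
  convert ((hc.cis e1_mul_self).mul (hb.cis e2_mul_self)).mul (ha.cis e1_mul_self) using 1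
  · rfl
  · rfl
  change _ = ((c' : ℍ[ℝ]) * e1 * A * B + A * ((b' : ℍ[ℝ]) * e2 * B)) * C +
    A * B * ((a' : ℍ[ℝ]) * e1 * C)
  rw [hA, add_mul _ _ C, hB, coe_add]
  noncomm_ring

namespace Real.smoothTransition

lemma deriv_of_neg {x : ℝ} (hx : x < 0) : deriv smoothTransition x = 0 := by
  have h : smoothTransition =ᶠ[nhds x] fun _ => 0 := by
    filter_upwards [eventually_lt_nhds hx] with y hy using zero_of_nonpos hy.le
  rw [h.deriv_eq, deriv_const]

lemma deriv_of_one_lt {x : ℝ} (hx : 1 < x) : deriv smoothTransition x = 0 := by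
  have h : smoothTransition =ᶠ[nhds x] fun _ => 1 := by
    filter_upwards [eventually_gt_nhds hx] with y hy using one_of_one_le hy.le
  rw [h.deriv_eq, deriv_const]

lemma eq_zero_of_deriv_ne_zero {x y : ℝ} (hx : deriv smoothTransition x ≠ 0) (hy : y ≤ x - 1) :
    smoothTransition y = 0 :=
  zero_of_nonpos (by linarith [not_lt.mp (mt deriv_of_one_lt hx)])

@[fun_prop]
lemma contDiff_deriv {n : ℕ∞} : ContDiff ℝ n (deriv smoothTransition) :=
  (contDiff_infty_iff_deriv.mp smoothTransition.contDiff).2.of_le (mod_cast le_top)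

lemma hasDerivAt_comp_affine (c k t : ℝ) :
    HasDerivAt (fun s => smoothTransition (c * s - k))
      (c * deriv smoothTransition (c * t - k)) t := by
  have hd := (smoothTransition.contDiff (n := 1)).differentiable one_ne_zero (c * t - k)
  simpa [Function.comp_def, mul_comm] using hd.hasDerivAt.comp t (((hasDerivAt_id t).const_mul c).sub_const k)

end Real.smoothTransition

open Real

theorem stmt_16 (T : ℝ) (hT : 0 < T) (qb : ℍ[ℝ]) (hqb : ‖qb‖ = 1) :
    ∃ u1 u2 : ℝ → ℝ, ∃ q : ℝ → ℍ[ℝ],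
      ContDiffOn ℝ 1 u1 (Icc (0:ℝ) T) ∧ ContDiffOn ℝ 1 u2 (Icc (0:ℝ) T) ∧
      u1 0 = 0 ∧ u2 0 = 0 ∧ u1 T = 0 ∧ u2 T = 0 ∧
      (∀ t ∈ Icc (0:ℝ) T,
        HasDerivAt q ((((u1 t : ℝ) : ℍ[ℝ]) * e1 + ((u2 t : ℝ) : ℍ[ℝ]) * e2) * q t) t) ∧
      q 0 = 1 ∧ q T = qb := by
  obtain ⟨α, β, γ, hαβγ⟩ := exists_euler_angles hqb
  set c := 5 / T
  -- `σ k` switches from `0` to `1` on `[k T / 5, (k + 1) T / 5]`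
  set σ : ℝ → ℝ → ℝ := fun k t => smoothTransition (c * t - k)
  set σ' : ℝ → ℝ → ℝ := fun k t => c * deriv smoothTransition (c * t - k)
  have hσ (k t : ℝ) : HasDerivAt (σ k) (σ' k t) t := smoothTransition.hasDerivAt_comp_affine c k t
  have hstart {k : ℝ} (hk : 0 < k) : σ k 0 = 0 ∧ σ' k 0 = 0 := by
    simp [σ, σ', smoothTransition.zero_of_nonpos (neg_nonpos.2 hk.le),
      smoothTransition.deriv_of_neg (neg_lt_zero.2 hk)]
  have hend {k : ℝ} (hk : k < 4) : σ k T = 1 ∧ σ' k T = 0 := by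
    have hcT : c * T - k = 5 - k := by rw [div_mul_cancel₀ 5 hT.ne']
    simp [σ, σ', hcT, smoothTransition.one_of_one_le (by linarith : 1 ≤ 5 - k),
      smoothTransition.deriv_of_one_lt (by linarith : 1 < 5 - k)]
  have hlater {k l t : ℝ} (hkl : k + 1 ≤ l) (h : σ' k t ≠ 0) : σ l t = 0 :=
    smoothTransition.eq_zero_of_deriv_ne_zero (right_ne_zero_of_mul h) (by linarith)
  refine ⟨fun t => α * σ' 1 t + γ * σ' 3 t, fun t => β * σ' 2 t,
    fun t => cis e1 (γ * σ 3 t) * cis e2 (β * σ 2 t) * cis e1 (α * σ 1 t),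
    by fun_prop, by fun_prop, ?_, ?_, ?_, ?_, fun t _ => ?_, ?_, ?_⟩
  · simp [(hstart one_pos).2, (hstart three_pos).2]
  · simp [(hstart two_pos).2]
  · simp [(hend (by norm_num : (1 : ℝ) < 4)).2, (hend (by norm_num : (3 : ℝ) < 4)).2]
  · simp [(hend (by norm_num : (2 : ℝ) < 4)).2]
  · refine hasDerivAt_euler_path ((hσ 1 t).const_mul α) ((hσ 2 t).const_mul β)
      ((hσ 3 t).const_mul γ) (fun h => ?_) (fun h => ?_)
    · have h1 := right_ne_zero_of_mul h
      simp [hlater (by norm_num : (1 : ℝ) + 1 ≤ 2) h1, hlater (by norm_num : (1 : ℝ) + 1 ≤ 3) h1]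
    · simp [hlater (by norm_num : (2 : ℝ) + 1 ≤ 3) (right_ne_zero_of_mul h)]
  · simp [(hstart one_pos).1, (hstart two_pos).1, (hstart three_pos).1]
  · simp [(hend (by norm_num : (1 : ℝ) < 4)).1, (hend (by norm_num : (2 : ℝ) < 4)).1,
      (hend (by norm_num : (3 : ℝ) < 4)).1, hαβγ]
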